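/- arXiv:2301.10499 — 2 statements merged into one kernel-verified Lean document; each statement's English description precedes it below -/
import Mathlib

section
/- Let X be a symmetric n×n real matrix and λ > 0. If (U*, V*) is a critical point of the penalized problem f(U,V) = (1/2)‖X − U Vᵀ‖_F² + (λ/2)‖U − V‖_F² with nonnegativity constraints, satisfying ‖U*V*ᵀ‖₂ < 2λ + σ_n(X), then U* = V* and U* is a critical point of the symmetric NMF problem min_{U ≥ 0} (1/2)‖X − U Uᵀ‖_F², i.e., 0 ∈ (U*U*ᵀ − X)U* + ∂δ₊(U*). -/
/-!
Subtract the two stationarity conditions and pair the difference with `D = U - V` in the trace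
inner product. Since `X` is symmetric, the difference is
`(X + 2λ I - U Vᵀ) D + (D Uᵀ - U Dᵀ) U + (G - H) = 0`. The first term contributes at least
`(λ_min(X) + 2λ - ‖U Vᵀ‖₂) ‖D‖_F²`, the second is `½ ‖D Uᵀ - U Dᵀ‖_F² ≥ 0`, and the third is
nonnegative by complementarity, i.e. monotonicity of the normal cone of the nonnegative orthant.
The hypothesis makes the coefficient positive, so `D = 0`, and the first stationarity condition
becomes that of symmetric NMF.
-/

open Matrix BigOperators

/-- Frobenius norm of a real matrix. -/
noncomputable def frob {n m : ℕ} (A : Matrix (Fin n) (Fin m) ℝ) : ℝ :=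
  Real.sqrt (∑ i, ∑ j, (A i j)^2)

/-- Spectral (ℓ2 operator) norm of a square real matrix. -/
noncomputable def specNorm {n : ℕ} (A : Matrix (Fin n) (Fin n) ℝ) : ℝ :=
  ‖(Matrix.toEuclideanCLM (𝕜 := ℝ) A : EuclideanSpace ℝ (Fin n) →L[ℝ] EuclideanSpace ℝ (Fin n))‖

/-- Trace inner product ⟨A, B⟩ = trace(Aᵀ B). -/
noncomputable def inprod {n m : ℕ} (A B : Matrix (Fin n) (Fin m) ℝ) : ℝ :=
  (Aᵀ * B).trace

namespace Matrix

open scoped ComplexOrder in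
theorem IsHermitian.posSemidef_sub_smul_one_of_le_eigenvalues {ι 𝕜 : Type*} [Fintype ι]
    [DecidableEq ι] [RCLike 𝕜] {A : Matrix ι ι 𝕜} (hA : A.IsHermitian) {c : ℝ}
    (hc : ∀ i, c ≤ hA.eigenvalues i) : (A - (c : 𝕜) • 1).PosSemidef := by
  have hshift : A - (c : 𝕜) • 1 = Unitary.conjStarAlgAut 𝕜 _ hA.eigenvectorUnitary
      (diagonal fun i ↦ ((hA.eigenvalues i - c : ℝ) : 𝕜)) := by
    have hdiag : diagonal (fun i ↦ ((hA.eigenvalues i - c : ℝ) : 𝕜))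
        = diagonal (RCLike.ofReal ∘ hA.eigenvalues) - (c : 𝕜) • (1 : Matrix ι ι 𝕜) := by
      ext i j
      by_cases h : i = j <;> simp [h, Algebra.algebraMap_eq_smul_one, sub_smul]
    conv_lhs => rw [hA.spectral_theorem]
    rw [hdiag, map_sub, map_smul, map_one]
  rw [hshift, Unitary.conjStarAlgAut_apply, Unitary.isUnit_coe.posSemidef_star_right_conjugate_iff,
    posSemidef_diagonal_iff]
  exact fun i ↦ RCLike.ofReal_nonneg.mpr (sub_nonneg.mpr (hc i))

theorem IsHermitian.mul_dotProduct_self_le_dotProduct_mulVec {ι : Type*} [Fintype ι]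
    [DecidableEq ι] {A : Matrix ι ι ℝ} (hA : A.IsHermitian) {c : ℝ}
    (hc : ∀ i, c ≤ hA.eigenvalues i) (v : ι → ℝ) : c * (v ⬝ᵥ v) ≤ v ⬝ᵥ (A *ᵥ v) := by
  have h := (hA.posSemidef_sub_smul_one_of_le_eigenvalues hc).dotProduct_mulVec_nonneg v
  simp only [star_trivial, sub_mulVec, smul_mulVec, one_mulVec, dotProduct_sub,
    dotProduct_smul, smul_eq_mul, RCLike.ofReal_real_eq_id, id] at h
  linarith

end Matrix

theorem dotProduct_mulVec_le_specNorm_mul {n : ℕ} (A : Matrix (Fin n) (Fin n) ℝ)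
    (v : Fin n → ℝ) : v ⬝ᵥ (A *ᵥ v) ≤ specNorm A * (v ⬝ᵥ v) := by
  set x : EuclideanSpace ℝ (Fin n) := WithLp.toLp 2 v
  have hnorm : v ⬝ᵥ v = ‖x‖ * ‖x‖ := by
    rw [← real_inner_self_eq_norm_mul_norm, EuclideanSpace.inner_toLp_toLp, star_trivial]
  calc v ⬝ᵥ (A *ᵥ v) = inner ℝ x (Matrix.toEuclideanCLM (𝕜 := ℝ) A x) := by
        rw [Matrix.toEuclideanCLM_toLp, EuclideanSpace.inner_toLp_toLp, star_trivial,
          dotProduct_comm]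
    _ ≤ ‖x‖ * ‖Matrix.toEuclideanCLM (𝕜 := ℝ) A x‖ := real_inner_le_norm _ _
    _ ≤ ‖x‖ * (specNorm A * ‖x‖) := by gcongr; exact ContinuousLinearMap.le_opNorm _ _
    _ = specNorm A * (v ⬝ᵥ v) := by rw [hnorm]; ring

section inprod

variable {n r : ℕ}

theorem inprod_eq_sum (A B : Matrix (Fin n) (Fin r) ℝ) :
    inprod A B = ∑ i, ∑ j, A i j * B i j := by
  simp only [inprod, trace, diag, mul_apply, transpose_apply]
  exact Finset.sum_comm

theorem inprod_add_right (A B C : Matrix (Fin n) (Fin r) ℝ) :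
    inprod A (B + C) = inprod A B + inprod A C := by
  simp only [inprod, Matrix.mul_add, trace_add]

theorem inprod_zero_right (A : Matrix (Fin n) (Fin r) ℝ) : inprod A 0 = 0 := by
  simp [inprod]

theorem inprod_self_nonneg (A : Matrix (Fin n) (Fin r) ℝ) : 0 ≤ inprod A A := by
  simpa [inprod] using (posSemidef_conjTranspose_mul_self A).trace_nonneg

theorem inprod_self_eq_zero_iff {A : Matrix (Fin n) (Fin r) ℝ} : inprod A A = 0 ↔ A = 0 := by
  simpa [inprod] using trace_conjTranspose_mul_self_eq_zero_iff (A := A)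

theorem inprod_mul_eq_sum_dotProduct (M : Matrix (Fin n) (Fin n) ℝ)
    (D : Matrix (Fin n) (Fin r) ℝ) : inprod D (M * D) = ∑ j, Dᵀ j ⬝ᵥ (M *ᵥ Dᵀ j) := by
  simp only [inprod_eq_sum, dotProduct, mulVec, mul_apply, transpose_apply]
  exact Finset.sum_comm

theorem mul_inprod_self_le_inprod_mul {M : Matrix (Fin n) (Fin n) ℝ} {c : ℝ}
    (hM : ∀ v, c * (v ⬝ᵥ v) ≤ v ⬝ᵥ (M *ᵥ v)) (D : Matrix (Fin n) (Fin r) ℝ) :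
    c * inprod D D ≤ inprod D (M * D) := by
  have hself : inprod D D = ∑ j, Dᵀ j ⬝ᵥ Dᵀ j := by
    simpa using inprod_mul_eq_sum_dotProduct 1 D
  rw [hself, inprod_mul_eq_sum_dotProduct, Finset.mul_sum]
  exact Finset.sum_le_sum fun j _ ↦ hM _

theorem inprod_mul_skew_nonneg (D U : Matrix (Fin n) (Fin r) ℝ) :
    0 ≤ inprod D ((D * Uᵀ - U * Dᵀ) * U) := by
  set M := D * Uᵀ
  have hMT : Mᵀ = U * Dᵀ := by simp [M, transpose_mul]
  have hMM : (Mᵀ * Mᵀ).trace = (M * M).trace := by rw [← transpose_mul, trace_transpose]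
  have h : 2 * inprod D ((M - Mᵀ) * U) = inprod (M - Mᵀ) (M - Mᵀ) := by
    rw [inprod, inprod, trace_mul_comm, Matrix.mul_assoc, ← hMT]
    simp only [transpose_sub, transpose_transpose, Matrix.mul_sub, Matrix.sub_mul, trace_sub,
      trace_mul_comm Mᵀ M, hMM]
    ring
  rw [← hMT]
  linarith [inprod_self_nonneg (M - Mᵀ)]

theorem inprod_sub_sub_nonneg {U V G H : Matrix (Fin n) (Fin r) ℝ}
    (hU : ∀ i j, 0 ≤ U i j) (hV : ∀ i j, 0 ≤ V i j)
    (hGU : ∀ i j, G i j * U i j = 0) (hGnp : ∀ i j, G i j ≤ 0)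
    (hHV : ∀ i j, H i j * V i j = 0) (hHnp : ∀ i j, H i j ≤ 0) :
    0 ≤ inprod (U - V) (G - H) := by
  rw [inprod_eq_sum]
  refine Finset.sum_nonneg fun i _ ↦ Finset.sum_nonneg fun j _ ↦ ?_
  have hUH := mul_nonpos_of_nonneg_of_nonpos (hU i j) (hHnp i j)
  have hVG := mul_nonpos_of_nonneg_of_nonpos (hV i j) (hGnp i j)
  simp only [Matrix.sub_apply]
  linarith [hGU i j, hHV i j]

end inprod

theorem penalized_stationarity_sub_eq {n r : ℕ} {X : Matrix (Fin n) (Fin n) ℝ} (hX : Xᵀ = X)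
    (lam : ℝ) (U V G H : Matrix (Fin n) (Fin r) ℝ) :
    ((U * Vᵀ - X) * V + lam • (U - V) + G) - ((U * Vᵀ - X)ᵀ * U - lam • (U - V) + H)
      = (X + (2 * lam) • 1 - U * Vᵀ) * (U - V) + ((U - V) * Uᵀ - U * (U - V)ᵀ) * U
        + (G - H) := by
  simp only [transpose_sub, transpose_mul, transpose_transpose, hX, Matrix.mul_sub,
    Matrix.sub_mul, Matrix.add_mul, smul_mul, Matrix.one_mul, Matrix.mul_assoc]
  module

theorem critical_point_of_penalized_is_critical_of_symNMF_general {n r : ℕ}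
    (X : Matrix (Fin n) (Fin n) ℝ) (hX : X.IsHermitian)
    (lam : ℝ)
    (U V : Matrix (Fin n) (Fin r) ℝ)
    (hU : ∀ i j, 0 ≤ U i j) (hV : ∀ i j, 0 ≤ V i j)
    (G H : Matrix (Fin n) (Fin r) ℝ)
    (hGU : ∀ i j, G i j * U i j = 0) (hGnp : ∀ i j, G i j ≤ 0)
    (hHV : ∀ i j, H i j * V i j = 0) (hHnp : ∀ i j, H i j ≤ 0)
    (heq1 : (U * Vᵀ - X) * V + lam • (U - V) + G = 0)
    (heq2 : (U * Vᵀ - X)ᵀ * U - lam • (U - V) + H = 0)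
    (hnorm : specNorm (U * Vᵀ) < 2 * lam + ⨅ i, hX.eigenvalues i) :
    U = V ∧ ∃ G' : Matrix (Fin n) (Fin r) ℝ,
      (∀ i j, G' i j * U i j = 0) ∧ (∀ i j, G' i j ≤ 0) ∧
      (U * Uᵀ - X) * U + G' = 0 := by
  have hdiff := penalized_stationarity_sub_eq
    ((conjTranspose_eq_transpose_of_trivial X).symm.trans hX) lam U V G H
  rw [heq1, heq2, sub_zero] at hdiff
  set σ := ⨅ i, hX.eigenvalues i
  set D := U - V
  have hquad : (σ + 2 * lam - specNorm (U * Vᵀ)) * inprod D D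
      ≤ inprod D ((X + (2 * lam) • 1 - U * Vᵀ) * D) := by
    refine mul_inprod_self_le_inprod_mul (fun v ↦ ?_) D
    have hσ := hX.mul_dotProduct_self_le_dotProduct_mulVec
      (fun i ↦ ciInf_le (Finite.bddBelow_range _) i) v
    have hA := dotProduct_mulVec_le_specNorm_mul (U * Vᵀ) v
    simp only [sub_mulVec, add_mulVec, smul_mulVec, one_mulVec, dotProduct_sub, dotProduct_add,
      dotProduct_smul, smul_eq_mul]
    linarith
  have hsum := congrArg (inprod D) hdiff
  rw [inprod_zero_right, inprod_add_right, inprod_add_right] at hsum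
  have hDD : inprod D D ≤ 0 := by
    refine nonpos_of_mul_nonpos_right ?_ (show 0 < σ + 2 * lam - specNorm (U * Vᵀ) by linarith)
    linarith [inprod_mul_skew_nonneg D U, inprod_sub_sub_nonneg hU hV hGU hGnp hHV hHnp]
  obtain rfl : U = V :=
    sub_eq_zero.mp (inprod_self_eq_zero_iff.mp (hDD.antisymm (inprod_self_nonneg D)))
  exact ⟨rfl, G, hGU, hGnp, by simpa [D] using heq1⟩

theorem critical_point_of_penalized_is_critical_of_symNMF {n r : ℕ} [NeZero n]
    (X : Matrix (Fin n) (Fin n) ℝ) (hX : X.IsHermitian)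
    (lam : ℝ) (hlam : 0 < lam)
    (U V : Matrix (Fin n) (Fin r) ℝ)
    (hU : ∀ i j, 0 ≤ U i j) (hV : ∀ i j, 0 ≤ V i j)
    (G H : Matrix (Fin n) (Fin r) ℝ)
    (hGU : ∀ i j, G i j * U i j = 0) (hGnp : ∀ i j, G i j ≤ 0)
    (hHV : ∀ i j, H i j * V i j = 0) (hHnp : ∀ i j, H i j ≤ 0)
    (heq1 : (U * Vᵀ - X) * V + lam • (U - V) + G = 0)
    (heq2 : (U * Vᵀ - X)ᵀ * U - lam • (U - V) + H = 0)
    (hnorm : specNorm (U * Vᵀ) < 2 * lam + ⨅ i, hX.eigenvalues i) :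
    U = V ∧ ∃ G' : Matrix (Fin n) (Fin r) ℝ,
      (∀ i j, G' i j * U i j = 0) ∧ (∀ i j, G' i j ≤ 0) ∧
      (U * Uᵀ - X) * U + G' = 0 :=
  critical_point_of_penalized_is_critical_of_symNMF_general X hX lam U V hU hV G H hGU hGnp hHV hHnp
    heq1 heq2 hnorm
end

section
/- For any matrices U, V ∈ R^{n×r}, one has ⟨V Uᵀ U − U Vᵀ V, U − V⟩ ≤ ‖U Vᵀ‖₂ · ‖U − V‖_F², where ‖·‖₂ denotes the spectral norm. -/
open Matrix BigOperators

/-!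
With `X = U Vᵀ` and `D = U - V`, expanding and cycling traces gives
`⟨V Uᵀ U - U Vᵀ V, U - V⟩ = tr(Dᵀ X D) + tr(X X) - tr(Xᵀ X)`.
The last two terms contribute `-½ ‖X - Xᵀ‖_F² ≤ 0`, and `tr(Dᵀ X D)` is a sum of the quadratic
forms `d ⬝ X d` over the columns `d` of `D`, each at most `‖X‖₂ |d|²`.
-/

open scoped RealInnerProductSpace

namespace Matrix

variable {m n k R : Type*} [Fintype m] [Fintype n] [Fintype k]

theorem trace_transpose_mul_self_eq_sum_sq (A : Matrix m n ℝ) :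
    (Aᵀ * A).trace = ∑ i, ∑ j, A i j ^ 2 := by
  simp only [trace, diag, mul_apply, transpose_apply, sq]
  exact Finset.sum_comm

theorem trace_transpose_mul_self_nonneg (A : Matrix m n ℝ) : 0 ≤ (Aᵀ * A).trace := by
  rw [trace_transpose_mul_self_eq_sum_sq]
  positivity

theorem trace_mul_self_le_trace_transpose_mul_self (X : Matrix n n ℝ) :
    (X * X).trace ≤ (Xᵀ * X).trace := by
  have hskew := trace_transpose_mul_self_nonneg (X - Xᵀ)
  have hXX : (Xᵀ * Xᵀ).trace = (X * X).trace := by rw [← transpose_mul, trace_transpose]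
  have hXXt : (X * Xᵀ).trace = (Xᵀ * X).trace := trace_mul_comm _ _
  simp only [transpose_sub, transpose_transpose, sub_mul, mul_sub, trace_sub] at hskew
  linarith

theorem dotProduct_mulVec_le_opNorm [DecidableEq n] (A : Matrix n n ℝ) (x : n → ℝ) :
    x ⬝ᵥ A *ᵥ x ≤ ‖toEuclideanCLM (𝕜 := ℝ) A‖ * (x ⬝ᵥ x) := by
  set y : EuclideanSpace ℝ n := WithLp.toLp 2 x
  have hnorm : ‖y‖ ^ 2 = x ⬝ᵥ x := by
    rw [← real_inner_self_eq_norm_sq, EuclideanSpace.inner_toLp_toLp]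
    simp
  calc x ⬝ᵥ A *ᵥ x = ⟪y, toEuclideanCLM (𝕜 := ℝ) A y⟫ := (inner_toEuclideanCLM A y y).symm
    _ ≤ ‖y‖ * ‖toEuclideanCLM (𝕜 := ℝ) A y‖ := real_inner_le_norm _ _
    _ ≤ ‖y‖ * (‖toEuclideanCLM (𝕜 := ℝ) A‖ * ‖y‖) := by
        gcongr
        exact (toEuclideanCLM (𝕜 := ℝ) A).le_opNorm y
    _ = ‖toEuclideanCLM (𝕜 := ℝ) A‖ * (x ⬝ᵥ x) := by rw [← hnorm]; ring

theorem trace_transpose_mul_mul_le_opNorm [DecidableEq n] (A : Matrix n n ℝ) (D : Matrix n k ℝ) :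
    (Dᵀ * A * D).trace ≤ ‖toEuclideanCLM (𝕜 := ℝ) A‖ * (Dᵀ * D).trace := by
  have hcol : ∀ j, (Dᵀ * A * D) j j = Dᵀ j ⬝ᵥ A *ᵥ Dᵀ j := by
    intro j
    rw [Matrix.mul_assoc, mul_apply']
    congr 1
  simp only [trace, diag, hcol, mul_apply', Finset.mul_sum]
  exact Finset.sum_le_sum fun j _ => dotProduct_mulVec_le_opNorm A (Dᵀ j)

theorem trace_transpose_mul_sub_eq [CommRing R] (U V : Matrix m n R) :
    ((V * Uᵀ * U - U * Vᵀ * V)ᵀ * (U - V)).trace =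
      ((U - V)ᵀ * (U * Vᵀ) * (U - V)).trace + (U * Vᵀ * (U * Vᵀ)).trace -
        ((U * Vᵀ)ᵀ * (U * Vᵀ)).trace := by
  simp only [transpose_sub, transpose_mul, transpose_transpose, Matrix.sub_mul, Matrix.mul_sub,
    trace_sub]
  have hXX : (Vᵀ * (U * Vᵀ) * U).trace = (U * Vᵀ * (U * Vᵀ)).trace := by
    rw [trace_mul_comm, ← Matrix.mul_assoc]
  have hXtX : (Vᵀ * (V * Uᵀ) * U).trace = (V * Uᵀ * (U * Vᵀ)).trace := by
    rw [trace_mul_comm, trace_mul_comm (V * Uᵀ) (U * Vᵀ), Matrix.mul_assoc]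
  have hVXV : (Vᵀ * (V * Uᵀ) * V).trace = (Vᵀ * (U * Vᵀ) * V).trace := by
    rw [← trace_transpose]
    simp only [transpose_mul, transpose_transpose, Matrix.mul_assoc]
  linear_combination hXX - hXtX + hVXV

end Matrix

theorem frob_sq {n m : ℕ} (A : Matrix (Fin n) (Fin m) ℝ) : frob A ^ 2 = (Aᵀ * A).trace := by
  rw [frob, Real.sq_sqrt (by positivity), trace_transpose_mul_self_eq_sum_sq]

theorem inner_product_upper_bound {n r : ℕ} (U V : Matrix (Fin n) (Fin r) ℝ) :
    inprod (V * Uᵀ * U - U * Vᵀ * V) (U - V) ≤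
      specNorm (U * Vᵀ) * frob (U - V) ^ 2 := by
  rw [inprod, trace_transpose_mul_sub_eq, specNorm, frob_sq]
  have hconj := trace_transpose_mul_mul_le_opNorm (U * Vᵀ) (U - V)
  have hsq := trace_mul_self_le_trace_transpose_mul_self (U * Vᵀ)
  linarith
end
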